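/- Let G be a finite graph with at least one vertex and let q be a positive integer such that c^q(G) > 0. Then (1/|V(G)|) log c^q(G) = log q − ∫_0^∞ U^q_G(β) dβ; in particular the improper integral ∫_0^∞ U^q_G(β) dβ converges. -/

import Mathlib

noncomputable section

/-- The number of monochromatic edges of `G` under the `q`-colouring `σ`. -/
def monoEdges {V : Type*} (G : SimpleGraph V) {q : ℕ} (σ : V → Fin q) : ℕ :=
  {e ∈ G.edgeSet | ∃ u v, e = s(u, v) ∧ σ u = σ v}.ncard

/-- The `q`-state Potts model partition function at inverse temperature `β`. -/
def pottsZ {V : Type*} [Fintype V] [DecidableEq V] (G : SimpleGraph V) (q : ℕ) (β : ℝ) : ℝ :=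
  ∑ σ : V → Fin q, Real.exp (-β * (monoEdges G σ : ℝ))

/-- The internal energy per particle of the `q`-state Potts model. -/
def pottsU {V : Type*} [Fintype V] [DecidableEq V] (G : SimpleGraph V) (q : ℕ) (β : ℝ) : ℝ :=
  (1 / (Fintype.card V : ℝ)) *
    (∑ σ : V → Fin q, (monoEdges G σ : ℝ) * Real.exp (-β * (monoEdges G σ : ℝ))) / pottsZ G q β

/-- The free energy per particle of the `q`-state Potts model. -/
def pottsF {V : Type*} [Fintype V] [DecidableEq V] (G : SimpleGraph V) (q : ℕ) (β : ℝ) : ℝ :=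
  (1 / (Fintype.card V : ℝ)) * Real.log (pottsZ G q β)

/-- The number of proper `q`-colourings of `G`. -/
def properCount {V : Type*} [Fintype V] [DecidableEq V] (G : SimpleGraph V) (q : ℕ) : ℕ :=
  {σ : V → Fin q | ∀ u v, G.Adj u v → σ u ≠ σ v}.ncard

/-- `G` is `d`-regular: every vertex has exactly `d` neighbours. -/
def IsRegularGraph {V : Type*} (G : SimpleGraph V) (d : ℕ) : Prop :=
  ∀ v, (G.neighborSet v).ncard = d

/-- The complete bipartite graph with two parts of size `d`. -/
def Kdd (d : ℕ) : SimpleGraph (Fin d ⊕ Fin d) := completeBipartiteGraph (Fin d) (Fin d)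

/-- The complete bipartite graph `K_{4,4}`. -/
def K44 : SimpleGraph (Fin 4 ⊕ Fin 4) := completeBipartiteGraph (Fin 4) (Fin 4)

/-- The complete graph `K_5`. -/
def K5 : SimpleGraph (Fin 5) := SimpleGraph.completeGraph (Fin 5)

/-- The disjoint union of `k` copies of a graph `H`. -/
def disjointCopies {W : Type*} (k : ℕ) (H : SimpleGraph W) : SimpleGraph (Fin k × W) where
  Adj a b := a.1 = b.1 ∧ H.Adj a.2 b.2
  symm := ⟨fun _ _ ⟨h1, h2⟩ => ⟨h1.symm, h2.symm⟩⟩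
  loopless := ⟨fun a ⟨_, h2⟩ => H.loopless.irrefl a.2 h2⟩


section Aux

/-!
For any finite system with energies `E ≥ 0`, the function `β ↦ -log Z(β)` has derivative the
mean energy `⟨E⟩_β ≥ 0`. As `β → ∞` every state of positive energy is suppressed, so `Z(β)`
tends to the number of ground states. So `-log Z` is monotone with a finite limit, the integral
of `⟨E⟩_β` over `(a, ∞)` converges and equals `log Z(a) - log #{E = 0}`. For the Potts model the
energy is the number of monochromatic edges, the ground states are the proper colourings, and
`Z(0) = q ^ |V|`.
-/

namespace Boltzmann

open Filter MeasureTheory Real Set Topology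

variable {ι : Type*} [Fintype ι] (E : ι → ℝ)

def partitionFunction (β : ℝ) : ℝ :=
  ∑ i, exp (-β * E i)

def meanEnergy (β : ℝ) : ℝ :=
  (∑ i, E i * exp (-β * E i)) / partitionFunction E β

lemma partitionFunction_zero : partitionFunction E 0 = Fintype.card ι := by
  simp [partitionFunction]

lemma partitionFunction_pos [Nonempty ι] (β : ℝ) : 0 < partitionFunction E β :=
  Finset.sum_pos (fun _ _ => exp_pos _) Finset.univ_nonempty

lemma hasDerivAt_partitionFunction (β : ℝ) :
    HasDerivAt (partitionFunction E) (-∑ i, E i * exp (-β * E i)) β := by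
  rw [← Finset.sum_neg_distrib]
  refine HasDerivAt.fun_sum fun i _ => ?_
  simpa [mul_comm] using ((hasDerivAt_neg β).mul_const (E i)).exp

lemma hasDerivAt_neg_log_partitionFunction [Nonempty ι] (β : ℝ) :
    HasDerivAt (fun β => -log (partitionFunction E β)) (meanEnergy E β) β := by
  have := ((hasDerivAt_partitionFunction E β).log (partitionFunction_pos E β).ne').neg
  rwa [neg_div, neg_neg] at this

lemma meanEnergy_nonneg (hE : ∀ i, 0 ≤ E i) (β : ℝ) : 0 ≤ meanEnergy E β :=
  div_nonneg (Finset.sum_nonneg fun i _ => mul_nonneg (hE i) (exp_pos _).le)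
    (Finset.sum_nonneg fun _ _ => (exp_pos _).le)

lemma tendsto_partitionFunction_atTop (hE : ∀ i, 0 ≤ E i) :
    Tendsto (partitionFunction E) atTop (𝓝 {i | E i = 0}.ncard) := by
  classical
  have hterm (i : ι) :
      Tendsto (fun β => exp (-β * E i)) atTop (𝓝 (if E i = 0 then 1 else 0)) := by
    by_cases h : E i = 0
    · simp [h]
    · rw [if_neg h]
      refine tendsto_exp_atBot.comp ?_
      simp only [neg_mul]
      exact tendsto_neg_atBot_iff.mpr (tendsto_id.atTop_mul_const ((hE i).lt_of_ne' h))
  have hsum : Tendsto (partitionFunction E) atTop _ :=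
    tendsto_finsetSum Finset.univ fun i _ => hterm i
  rwa [Finset.sum_boole, ← Set.toFinset_ofPred, ← Set.ncard_eq_toFinset_card'] at hsum

theorem integrableOn_meanEnergy_and_integral_eq (hE : ∀ i, 0 ≤ E i) (hground : ∃ i, E i = 0)
    (a : ℝ) :
    IntegrableOn (meanEnergy E) (Ioi a) ∧
      ∫ β in Ioi a, meanEnergy E β =
        log (partitionFunction E a) - log {i | E i = 0}.ncard := by
  obtain ⟨i₀, hi₀⟩ := hground
  have : Nonempty ι := ⟨i₀⟩
  have hcount : (0 : ℝ) < {i | E i = 0}.ncard := by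
    exact_mod_cast (Set.ncard_pos (Set.toFinite _)).mpr ⟨i₀, hi₀⟩
  have hderiv x (_ : x ∈ Ici a) := hasDerivAt_neg_log_partitionFunction E x
  have hlim := ((continuousAt_log hcount.ne').tendsto.comp
    (tendsto_partitionFunction_atTop E hE)).neg
  have hnonneg β (_ : β ∈ Ioi a) := meanEnergy_nonneg E hE β
  refine ⟨integrableOn_Ioi_deriv_of_nonneg' hderiv hnonneg hlim, ?_⟩
  rw [integral_Ioi_of_hasDerivAt_of_nonneg' hderiv hnonneg hlim]
  ring

end Boltzmann

open Boltzmann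

lemma monoEdges_eq_zero_iff {V : Type*} [Finite V] (G : SimpleGraph V) {q : ℕ} (σ : V → Fin q) :
    monoEdges G σ = 0 ↔ ∀ u v, G.Adj u v → σ u ≠ σ v := by
  rw [monoEdges, Set.ncard_eq_zero (Set.toFinite _), Set.eq_empty_iff_forall_notMem]
  constructor
  · exact fun h u v hadj hσ => h _ ⟨hadj, u, v, rfl, hσ⟩
  · rintro h e ⟨he, u, v, rfl, hσ⟩
    exact h u v he hσ

lemma properCount_eq_ncard_monoEdges_eq_zero {V : Type*} [Fintype V] [DecidableEq V]
    (G : SimpleGraph V) (q : ℕ) :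
    properCount G q = {σ : V → Fin q | (monoEdges G σ : ℝ) = 0}.ncard := by
  simp only [properCount, Nat.cast_eq_zero, monoEdges_eq_zero_iff]

lemma pottsU_eq_meanEnergy {V : Type*} [Fintype V] [DecidableEq V] (G : SimpleGraph V) (q : ℕ)
    (β : ℝ) :
    pottsU G q β =
      (Fintype.card V : ℝ)⁻¹ * meanEnergy (fun σ : V → Fin q => (monoEdges G σ : ℝ)) β := by
  rw [pottsU, one_div, mul_div_assoc]
  rfl

theorem stmt12_general {V : Type*} [Fintype V] [DecidableEq V] [Nonempty V]
    (G : SimpleGraph V) (q : ℕ) (hc : 0 < properCount G q) :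
    MeasureTheory.IntegrableOn (fun β => pottsU G q β) (Set.Ioi (0:ℝ)) ∧
      (1 / (Fintype.card V : ℝ)) * Real.log (properCount G q) =
        Real.log q - ∫ β in Set.Ioi (0:ℝ), pottsU G q β := by
  set E : (V → Fin q) → ℝ := fun σ => monoEdges G σ
  have hground : ∃ σ, E σ = 0 := by
    rw [properCount_eq_ncard_monoEdges_eq_zero] at hc
    exact (Set.ncard_pos (Set.toFinite _)).mp hc
  obtain ⟨hint, hval⟩ :=
    integrableOn_meanEnergy_and_integral_eq E (fun σ => Nat.cast_nonneg _) hground 0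
  have hN : (Fintype.card V : ℝ) ≠ 0 := by positivity
  simp only [pottsU_eq_meanEnergy]
  refine ⟨hint.const_mul _, ?_⟩
  rw [MeasureTheory.integral_const_mul, hval, partitionFunction_zero, Fintype.card_fun,
    Fintype.card_fin, Nat.cast_pow, Real.log_pow, ← properCount_eq_ncard_monoEdges_eq_zero]
  field_simp
  ring

theorem stmt12 {V : Type*} [Fintype V] [DecidableEq V] [Nonempty V]
    (G : SimpleGraph V) (q : ℕ) (hq : 0 < q) (hc : 0 < properCount G q) :
    MeasureTheory.IntegrableOn (fun β => pottsU G q β) (Set.Ioi (0:ℝ)) ∧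
      (1 / (Fintype.card V : ℝ)) * Real.log (properCount G q) =
        Real.log q - ∫ β in Set.Ioi (0:ℝ), pottsU G q β :=
  stmt12_general G q hc
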